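/- arXiv:2205.13040 — 2 statements merged into one kernel-verified Lean document; each statement's English description precedes it below -/
import Mathlib

section
/- Coercivity of the relative entropy (Lemma 4.1): Let Σ* ⊂ ℝ^d be a nonempty closed set, let c, L, M > 0, let μ be a finite Borel measure on ℝ^d and ν : ℝ^d → ℝ^d a Borel vector field with |ν| = 1 μ-almost everywhere. Let ξ : ℝ^d → ℝ^d be Borel measurable with |ξ(x)| ≤ max{1 − c·dist(x,Σ*)², 0} for all x, and let ϑ : ℝ^d → ℝ be Borel measurable with |ϑ(x)| ≤ min{L·dist(x,Σ*), M} for all x. Then: (1) ∫ (1/2)|ν − ξ|² dμ ≤ ∫ (1 − ⟨ν, ξ⟩) dμ, and (2) ∫ ϑ² dμ ≤ max{L²/c, M²} · ∫ (1 − ⟨ν, ξ⟩) dμ. -/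
open MeasureTheory Metric Set

open scoped RealInnerProductSpace

/-! Pointwise, `½|ν − ξ|² = ½(|ν|² + |ξ|²) − ⟨ν, ξ⟩ ≤ 1 − ⟨ν, ξ⟩` because both vectors are short,
and `1 − ⟨ν, ξ⟩ ≥ 1 − |ξ| ≥ min{c dist², 1}`. Where `c dist² ≤ 1`, the bound `|ϑ| ≤ L dist` gives
`ϑ² ≤ (L²/c) · c dist²`; elsewhere `ξ = 0` and `ϑ² ≤ M²`. Integrating these bounds gives both
inequalities. -/

section Pointwise

variable {E : Type*} [NormedAddCommGroup E] [InnerProductSpace ℝ E]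

theorem half_norm_sub_sq_le_one_sub_inner {v w : E} (hv : ‖v‖ ≤ 1) (hw : ‖w‖ ≤ 1) :
    1 / 2 * ‖v - w‖ ^ 2 ≤ 1 - ⟪v, w⟫ := by
  rw [norm_sub_sq_real]
  nlinarith [norm_nonneg v, norm_nonneg w]

theorem one_sub_norm_le_one_sub_inner {v : E} (hv : ‖v‖ ≤ 1) (w : E) :
    1 - ‖w‖ ≤ 1 - ⟪v, w⟫ := by
  have : ⟪v, w⟫ ≤ ‖w‖ :=
    calc ⟪v, w⟫ ≤ ‖v‖ * ‖w‖ := real_inner_le_norm v w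
      _ ≤ ‖w‖ := mul_le_of_le_one_left (norm_nonneg w) hv
  linarith

end Pointwise

theorem max_one_sub_mul_sq_le_one {c : ℝ} (hc : 0 ≤ c) (t : ℝ) : max (1 - c * t ^ 2) 0 ≤ 1 :=
  max_le (by nlinarith [sq_nonneg t]) zero_le_one

theorem sq_le_max_mul_one_sub_of_abs_le_min {c L M s t ρ : ℝ} (hc : 0 < c)
    (hs : |s| ≤ min (L * t) M) (hρ : ρ ≤ max (1 - c * t ^ 2) 0) :
    s ^ 2 ≤ max (L ^ 2 / c) (M ^ 2) * (1 - ρ) := by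
  have hs_sq : s ^ 2 ≤ min (L * t) M ^ 2 := by
    rw [← sq_abs]
    exact pow_le_pow_left₀ (abs_nonneg s) hs 2
  have hmin_nonneg : 0 ≤ min (L * t) M := (abs_nonneg s).trans hs
  rcases le_or_gt (c * t ^ 2) 1 with hnear | hfar
  · have hρ' : c * t ^ 2 ≤ 1 - ρ := by
      rw [max_eq_left (by linarith)] at hρ
      linarith
    calc s ^ 2 ≤ (L * t) ^ 2 :=
          hs_sq.trans (pow_le_pow_left₀ hmin_nonneg (min_le_left _ _) 2)
      _ = L ^ 2 / c * (c * t ^ 2) := by field_simp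
      _ ≤ max (L ^ 2 / c) (M ^ 2) * (1 - ρ) :=
          mul_le_mul (le_max_left _ _) hρ' (by positivity) (by positivity)
  · have hρ' : 1 ≤ 1 - ρ := by
      rw [max_eq_right (by linarith)] at hρ
      linarith
    calc s ^ 2 ≤ M ^ 2 := hs_sq.trans (pow_le_pow_left₀ hmin_nonneg (min_le_right _ _) 2)
      _ ≤ max (L ^ 2 / c) (M ^ 2) := le_max_right _ _
      _ ≤ max (L ^ 2 / c) (M ^ 2) * (1 - ρ) :=
          le_mul_of_one_le_right (le_max_of_le_right (sq_nonneg M)) hρ'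

theorem integrable_one_sub_inner {α E : Type*} [MeasurableSpace α] {μ : Measure α}
    [IsFiniteMeasure μ] [NormedAddCommGroup E] [InnerProductSpace ℝ E] {v w : α → E}
    (hv : AEStronglyMeasurable v μ) (hw : AEStronglyMeasurable w μ)
    (hv_le : ∀ᵐ x ∂μ, ‖v x‖ ≤ 1) (hw_le : ∀ᵐ x ∂μ, ‖w x‖ ≤ 1) :
    Integrable (fun x => 1 - ⟪v x, w x⟫) μ := by
  refine (integrable_const 1).sub ((integrable_const 1).mono' (hv.inner hw) ?_)
  filter_upwards [hv_le, hw_le] with x hvx hwx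
  calc ‖⟪v x, w x⟫‖ ≤ ‖v x‖ * ‖w x‖ := norm_inner_le_norm _ _
    _ ≤ 1 := mul_le_one₀ hvx (norm_nonneg _) hwx

theorem coercivity_of_relative_entropy_general
    {d : ℕ} (Sig : Set (EuclideanSpace ℝ (Fin d)))
    (c L M : ℝ) (hc : 0 < c)
    (μ : Measure (EuclideanSpace ℝ (Fin d))) [IsFiniteMeasure μ]
    (ν : EuclideanSpace ℝ (Fin d) → EuclideanSpace ℝ (Fin d))
    (hν_meas : Measurable ν) (hν_unit : ∀ᵐ x ∂μ, ‖ν x‖ = 1)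
    (ξ : EuclideanSpace ℝ (Fin d) → EuclideanSpace ℝ (Fin d))
    (hξ_meas : Measurable ξ)
    (hξ_short : ∀ x, ‖ξ x‖ ≤ max (1 - c * infDist x Sig ^ 2) 0)
    (ϑ : EuclideanSpace ℝ (Fin d) → ℝ)
    (hϑ_bdd : ∀ x, |ϑ x| ≤ min (L * infDist x Sig) M) :
    (∫ x, (1 / 2) * ‖ν x - ξ x‖ ^ 2 ∂μ ≤ ∫ x, (1 - (inner ℝ (ν x) (ξ x) : ℝ)) ∂μ) ∧
      ∫ x, ϑ x ^ 2 ∂μ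
        ≤ max (L ^ 2 / c) (M ^ 2) * ∫ x, (1 - (inner ℝ (ν x) (ξ x) : ℝ)) ∂μ := by
  have hν_le : ∀ᵐ x ∂μ, ‖ν x‖ ≤ 1 := hν_unit.mono fun x hx => hx.le
  have hξ_le (x) : ‖ξ x‖ ≤ 1 := (hξ_short x).trans (max_one_sub_mul_sq_le_one hc.le _)
  have hint := integrable_one_sub_inner hν_meas.aestronglyMeasurable
    hξ_meas.aestronglyMeasurable hν_le (ae_of_all μ hξ_le)
  refine ⟨integral_mono_of_nonneg (ae_of_all μ fun x => by positivity) hint ?_, ?_⟩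
  · filter_upwards [hν_le] with x hx
    exact half_norm_sub_sq_le_one_sub_inner hx (hξ_le x)
  · rw [← integral_const_mul]
    refine integral_mono_of_nonneg (ae_of_all μ fun x => sq_nonneg _) (hint.const_mul _) ?_
    filter_upwards [hν_le] with x hx
    exact (sq_le_max_mul_one_sub_of_abs_le_min hc (hϑ_bdd x) (hξ_short x)).trans
      (mul_le_mul_of_nonneg_left (one_sub_norm_le_one_sub_inner hx _)
        (le_max_of_le_right (sq_nonneg M)))

/-- **Coercivity of the relative entropy** (Lemma 4.1). If `|ξ| ≤ max{1 − c dist²(·,Σ*), 0}`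
and `|ϑ| ≤ min{L dist(·,Σ*), M}`, then the tilt excess `∫ ½|ν − ξ|² dμ` and the weighted
volume term `∫ ϑ² dμ` are controlled by the relative entropy `∫ (1 − ⟨ν, ξ⟩) dμ`. -/
theorem coercivity_of_relative_entropy
    {d : ℕ} (Sig : Set (EuclideanSpace ℝ (Fin d))) (hne : Sig.Nonempty) (hcl : IsClosed Sig)
    (c L M : ℝ) (hc : 0 < c) (hL : 0 < L) (hM : 0 < M)
    (μ : Measure (EuclideanSpace ℝ (Fin d))) [IsFiniteMeasure μ]
    (ν : EuclideanSpace ℝ (Fin d) → EuclideanSpace ℝ (Fin d))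
    (hν_meas : Measurable ν) (hν_unit : ∀ᵐ x ∂μ, ‖ν x‖ = 1)
    (ξ : EuclideanSpace ℝ (Fin d) → EuclideanSpace ℝ (Fin d))
    (hξ_meas : Measurable ξ)
    (hξ_short : ∀ x, ‖ξ x‖ ≤ max (1 - c * infDist x Sig ^ 2) 0)
    (ϑ : EuclideanSpace ℝ (Fin d) → ℝ)
    (hϑ_meas : Measurable ϑ)
    (hϑ_bdd : ∀ x, |ϑ x| ≤ min (L * infDist x Sig) M) :
    (∫ x, (1 / 2) * ‖ν x - ξ x‖ ^ 2 ∂μ ≤ ∫ x, (1 - (inner ℝ (ν x) (ξ x) : ℝ)) ∂μ) ∧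
      ∫ x, ϑ x ^ 2 ∂μ
        ≤ max (L ^ 2 / c) (M ^ 2) * ∫ x, (1 - (inner ℝ (ν x) (ξ x) : ℝ)) ∂μ :=
  coercivity_of_relative_entropy_general Sig c L M hc μ ν hν_meas hν_unit ξ hξ_meas hξ_short ϑ
    hϑ_bdd
end

section
/- Gauss–Green antisymmetry identity: Let χ : ℝ^d → {0,1} be measurable with {χ = 1} of finite Lebesgue measure and let (μ, ν) be a Gauss–Green pair for χ. Let B, ξ : ℝ^d → ℝ^d be C² vector fields with ξ compactly supported. Then ∫_{ℝ^d} ⟨ν(x), (∇·(B⊗ξ − ξ⊗B))(x)⟩ dμ(x) = 0, where (∇·M)_j := ∑_i ∂_i M_{ij} and (B⊗ξ)_{ij} = B_i ξ_j. -/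
open MeasureTheory Metric Set

noncomputable section

/-- Spatial divergence of a vector field on `ℝ^d`. -/
def vdiv {d : ℕ} (f : EuclideanSpace ℝ (Fin d) → EuclideanSpace ℝ (Fin d))
    (x : EuclideanSpace ℝ (Fin d)) : ℝ :=
  ∑ i, fderiv ℝ f x (EuclideanSpace.single i 1) i

/-- A Gauss–Green pair `(μ, ν)` for an indicator-type function `χ : ℝ^d → ℝ`:
`μ` is a finite Borel measure, `ν` is a Borel unit (μ-a.e.) vector field, and the
Gauss–Green formula `∫ χ (∇·ψ) dx = ∫ ⟨ψ, ν⟩ dμ` holds for all compactly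
supported `C¹` vector fields `ψ`. -/
structure IsGaussGreenPair {d : ℕ} (χ : EuclideanSpace ℝ (Fin d) → ℝ)
    (μ : Measure (EuclideanSpace ℝ (Fin d)))
    (ν : EuclideanSpace ℝ (Fin d) → EuclideanSpace ℝ (Fin d)) : Prop where
  finite : IsFiniteMeasure μ
  nu_meas : Measurable ν
  nu_unit : ∀ᵐ x ∂μ, ‖ν x‖ = 1
  gauss_green : ∀ ψ : EuclideanSpace ℝ (Fin d) → EuclideanSpace ℝ (Fin d),
    ContDiff ℝ 1 ψ → HasCompactSupport ψ →
    ∫ x, χ x * vdiv ψ x = ∫ x, (inner ℝ (ψ x) (ν x) : ℝ) ∂μ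

/-! The field `ψ := ∇·M` for the antisymmetric matrix field `M := B⊗ξ − ξ⊗B` is `C¹` and
compactly supported, and its divergence `∑ᵢⱼ ∂ⱼ∂ᵢ Mᵢⱼ` vanishes because second derivatives
commute while `M` is antisymmetric. Testing the Gauss–Green formula against `ψ` therefore gives
`∫ ⟨ψ, ν⟩ dμ = ∫ χ (∇·ψ) dx = 0`. -/

lemma Finset.sum_sum_eq_zero_of_antisymm {ι : Type*} [Fintype ι] {a : ι → ι → ℝ}
    (ha : ∀ i j, a j i = -a i j) : ∑ i, ∑ j, a i j = 0 := by
  have h : ∑ i, ∑ j, a i j = -∑ i, ∑ j, a i j := by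
    conv_lhs => rw [Finset.sum_comm]
    simp only [← Finset.sum_neg_distrib]
    exact Finset.sum_congr rfl fun i _ => Finset.sum_congr rfl fun j _ => ha i j
  linarith

lemma fderiv_euclidean_apply {𝕜 H ι : Type*} [RCLike 𝕜] [NormedAddCommGroup H]
    [NormedSpace 𝕜 H] [Fintype ι] {f : H → EuclideanSpace 𝕜 ι} {x : H}
    (hf : DifferentiableAt 𝕜 f x) (v : H) (j : ι) :
    fderiv 𝕜 f x v j = fderiv 𝕜 (fun z => f z j) x v :=
  (congrArg (fun L => L v) ((EuclideanSpace.proj j).hasFDerivAt.comp x hf.hasFDerivAt).fderiv).symm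

lemma fderiv_fderiv_apply_const {𝕜 H F : Type*} [NontriviallyNormedField 𝕜]
    [NormedAddCommGroup H] [NormedSpace 𝕜 H] [NormedAddCommGroup F] [NormedSpace 𝕜 F]
    {g : H → F} {x : H} (hg : DifferentiableAt 𝕜 (fderiv 𝕜 g) x) (v w : H) :
    fderiv 𝕜 (fun z => fderiv 𝕜 g z w) x v = fderiv 𝕜 (fderiv 𝕜 g) x v w := by
  rw [fderiv_clm_apply hg (differentiableAt_const w)]
  simp

/-- `M i j` is the entry `Mᵢⱼ`, so that `(matrixDiv M)ⱼ = ∑ᵢ ∂ᵢ Mᵢⱼ`. -/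
def matrixDiv {d : ℕ} (M : Fin d → Fin d → EuclideanSpace ℝ (Fin d) → ℝ)
    (x : EuclideanSpace ℝ (Fin d)) : EuclideanSpace ℝ (Fin d) :=
  WithLp.toLp 2 fun j => ∑ i, fderiv ℝ (M i j) x (EuclideanSpace.single i 1)

section MatrixDiv

variable {d : ℕ} {M : Fin d → Fin d → EuclideanSpace ℝ (Fin d) → ℝ}

lemma matrixDiv_apply (x : EuclideanSpace ℝ (Fin d)) (j : Fin d) :
    matrixDiv M x j = ∑ i, fderiv ℝ (M i j) x (EuclideanSpace.single i 1) :=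
  rfl

lemma contDiff_matrixDiv {m n : WithTop ℕ∞} (hM : ∀ i j, ContDiff ℝ n (M i j))
    (hmn : m + 1 ≤ n) : ContDiff ℝ m (matrixDiv M) :=
  contDiff_euclidean.mpr fun j =>
    ContDiff.sum (s := Finset.univ)
      (f := fun i x => fderiv ℝ (M i j) x (EuclideanSpace.single i 1))
      fun i _ => ((hM i j).fderiv_right hmn).clm_apply contDiff_const

lemma HasCompactSupport.matrixDiv (hM : ∀ i j, HasCompactSupport (M i j)) :
    HasCompactSupport (matrixDiv M) := by
  refine HasCompactSupport.intro (isCompact_iUnion fun i => isCompact_iUnion fun j => hM i j)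
    fun x hx => ?_
  simp only [mem_iUnion, not_exists] at hx
  ext j
  simp [matrixDiv_apply, fun i => fderiv_of_notMem_tsupport ℝ (hx i j)]

lemma fderiv_matrixDiv_apply (hM : ∀ i j, ContDiff ℝ 2 (M i j))
    (x v : EuclideanSpace ℝ (Fin d)) (j : Fin d) :
    fderiv ℝ (matrixDiv M) x v j =
      ∑ i, fderiv ℝ (fderiv ℝ (M i j)) x v (EuclideanSpace.single i 1) := by
  have hD : ∀ i, ContDiff ℝ 1 (fderiv ℝ (M i j)) := fun i => (hM i j).fderiv_right le_rfl
  rw [fderiv_euclidean_apply ((contDiff_matrixDiv hM le_rfl).differentiable one_ne_zero x),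
    funext (matrixDiv_apply (M := M) · j),
    fderiv_fun_sum fun i _ => ((hD i).clm_apply contDiff_const).differentiable one_ne_zero x,
    _root_.sum_apply]
  exact Finset.sum_congr rfl fun i _ =>
    fderiv_fderiv_apply_const ((hD i).differentiable one_ne_zero x) v _

lemma vdiv_matrixDiv_eq_zero (hM : ∀ i j, ContDiff ℝ 2 (M i j))
    (hanti : ∀ i j, M j i = -M i j) (x : EuclideanSpace ℝ (Fin d)) :
    vdiv (matrixDiv M) x = 0 := by
  set e : Fin d → EuclideanSpace ℝ (Fin d) := fun i => EuclideanSpace.single i 1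
  have hD2 : ∀ i j, fderiv ℝ (fderiv ℝ (M j i)) x (e i) (e j) =
      -fderiv ℝ (fderiv ℝ (M i j)) x (e j) (e i) := fun i j => by
    have hD : fderiv ℝ (M j i) = -fderiv ℝ (M i j) := by
      rw [hanti]
      exact funext fun _ => fderiv_neg
    rw [hD, fderiv_neg, ((hM i j).contDiffAt.isSymmSndFDerivAt (by simp)).eq]
    rfl
  calc vdiv (matrixDiv M) x = ∑ j, ∑ i, fderiv ℝ (fderiv ℝ (M i j)) x (e j) (e i) :=
        Finset.sum_congr rfl fun j _ => fderiv_matrixDiv_apply hM x (e j) j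
    _ = 0 := Finset.sum_sum_eq_zero_of_antisymm fun j i => hD2 i j

end MatrixDiv

lemma IsGaussGreenPair.integral_inner_eq_zero_of_vdiv_eq_zero {d : ℕ}
    {χ : EuclideanSpace ℝ (Fin d) → ℝ} {μ : Measure (EuclideanSpace ℝ (Fin d))}
    {ν ψ : EuclideanSpace ℝ (Fin d) → EuclideanSpace ℝ (Fin d)} (hgg : IsGaussGreenPair χ μ ν)
    (hψ : ContDiff ℝ 1 ψ) (hψ_supp : HasCompactSupport ψ) (hdiv : ∀ x, vdiv ψ x = 0) :
    ∫ x, (inner ℝ (ψ x) (ν x) : ℝ) ∂μ = 0 := by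
  rw [← hgg.gauss_green ψ hψ hψ_supp]
  simp [hdiv]

theorem gauss_green_antisymmetry_general
    {d : ℕ} (χ : EuclideanSpace ℝ (Fin d) → ℝ)
    (μ : Measure (EuclideanSpace ℝ (Fin d)))
    (ν : EuclideanSpace ℝ (Fin d) → EuclideanSpace ℝ (Fin d))
    (hgg : IsGaussGreenPair χ μ ν)
    (B ξ : EuclideanSpace ℝ (Fin d) → EuclideanSpace ℝ (Fin d))
    (hB : ContDiff ℝ 2 B) (hξ : ContDiff ℝ 2 ξ) (hξ_supp : HasCompactSupport ξ) :
    ∫ x, ∑ j, ν x j *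
        (∑ i, fderiv ℝ (fun z => B z i * ξ z j - ξ z i * B z j) x
          (EuclideanSpace.single i 1)) ∂μ = 0 := by
  set M : Fin d → Fin d → EuclideanSpace ℝ (Fin d) → ℝ :=
    fun i j z => B z i * ξ z j - ξ z i * B z j
  have hM : ∀ i j, ContDiff ℝ 2 (M i j) := fun i j =>
    ((contDiff_euclidean.mp hB i).mul (contDiff_euclidean.mp hξ j)).sub
      ((contDiff_euclidean.mp hξ i).mul (contDiff_euclidean.mp hB j))
  have hξ_coord_supp : ∀ i, HasCompactSupport fun z => ξ z i := fun i =>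
    hξ_supp.comp_left (g := fun v : EuclideanSpace ℝ (Fin d) => v i) rfl
  have hM_supp : ∀ i j, HasCompactSupport (M i j) := fun i j =>
    (hξ_coord_supp j).mul_left.comp₂_left (hξ_coord_supp i).mul_right (sub_zero 0)
  have hM_anti : ∀ i j, M j i = -M i j := fun i j =>
    funext fun z => by simp only [M, Pi.neg_apply]; ring
  calc _ = ∫ x, (inner ℝ (matrixDiv M x) (ν x) : ℝ) ∂μ := by
        simp only [PiLp.inner_apply, matrixDiv_apply, RCLike.inner_apply, conj_trivial]
        rfl
    _ = 0 := hgg.integral_inner_eq_zero_of_vdiv_eq_zero (contDiff_matrixDiv hM le_rfl)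
        (.matrixDiv hM_supp) (vdiv_matrixDiv_eq_zero hM hM_anti)

/-- **Gauss–Green antisymmetry identity**: for a Gauss–Green pair `(μ, ν)` of an
indicator `χ` and `C²` vector fields `B, ξ` with `ξ` compactly supported,
`∫ ⟨ν, ∇·(B⊗ξ − ξ⊗B)⟩ dμ = 0`, where `(∇·M)_j = ∑_i ∂_i M_{ij}`. -/
theorem gauss_green_antisymmetry
    {d : ℕ} (χ : EuclideanSpace ℝ (Fin d) → ℝ)
    (hχ_meas : Measurable χ) (hχ01 : ∀ x, χ x = 0 ∨ χ x = 1)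
    (hχ_fin : volume {x | χ x = 1} < ⊤)
    (μ : Measure (EuclideanSpace ℝ (Fin d)))
    (ν : EuclideanSpace ℝ (Fin d) → EuclideanSpace ℝ (Fin d))
    (hgg : IsGaussGreenPair χ μ ν)
    (B ξ : EuclideanSpace ℝ (Fin d) → EuclideanSpace ℝ (Fin d))
    (hB : ContDiff ℝ 2 B) (hξ : ContDiff ℝ 2 ξ) (hξ_supp : HasCompactSupport ξ) :
    ∫ x, ∑ j, ν x j *
        (∑ i, fderiv ℝ (fun z => B z i * ξ z j - ξ z i * B z j) x
          (EuclideanSpace.single i 1)) ∂μ = 0 :=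
  gauss_green_antisymmetry_general χ μ ν hgg B ξ hB hξ hξ_supp
end
end
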